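/- arXiv:1204.0585 — 4 statements merged into one kernel-verified Lean document; each statement's English description precedes it below -/
import Mathlib

section
/- Let S be a symmetric positive definite pf×pf real matrix and X a symmetric positive definite p×p real matrix. Then the compressed f×f matrix B̂ = (1/p)·Σ_{i,j=1}^p X_{ij}·S(j,i) is symmetric positive definite. -/
open Matrix
open scoped BigOperators

/-- The `(i,j)`-th `f × f` block submatrix of a `pf × pf` matrix (indexed by
`Fin p × Fin f`, with `(i,k)` playing the role of row `(i-1)f + k`). -/
def Matrix.blockSub {p f : ℕ} (S : Matrix (Fin p × Fin f) (Fin p × Fin f) ℝ)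
    (i j : Fin p) : Matrix (Fin f) (Fin f) ℝ := fun k l => S (i, k) (j, l)

/-- the compressed matrix `B̂ = (1/p)·Σ_{i,j} X_{ij}·S(j,i)` is
symmetric positive definite whenever `S` and `X` are. -/
theorem stmt2 (p f : ℕ) (hp : 1 ≤ p) (hf : 1 ≤ f)
    (S : Matrix (Fin p × Fin f) (Fin p × Fin f) ℝ) (hS : S.IsSymm) (hSpd : S.PosDef)
    (X : Matrix (Fin p) (Fin p) ℝ) (hX : X.IsSymm) (hXpd : X.PosDef)
    (Bhat : Matrix (Fin f) (Fin f) ℝ)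
    (hBhat : Bhat = (p : ℝ)⁻¹ • ∑ i : Fin p, ∑ j : Fin p, X i j • S.blockSub j i) :
    Bhat.IsSymm ∧ Bhat.PosDef := by
  have key : ∀ k l, Bhat k l = (p:ℝ)⁻¹ * ∑ i, ∑ j, X i j * S (j,k) (i,l) := by
    intro k l
    simp [hBhat, Matrix.sum_apply, Matrix.smul_apply, Matrix.blockSub, smul_eq_mul]
  have hsymm : Bhat.IsSymm := by
    apply Matrix.IsSymm.ext
    intro k l
    rw [key, key]
    congr 1
    calc ∑ i, ∑ j, X i j * S (j,l) (i,k)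
        = ∑ i, ∑ j, X j i * S (i,k) (j,l) := by
          refine Finset.sum_congr rfl fun i _ => Finset.sum_congr rfl fun j _ => ?_
          rw [hX.apply j i, hS.apply (i,k) (j,l)]
      _ = ∑ j, ∑ i, X j i * S (i,k) (j,l) := Finset.sum_comm
  refine ⟨hsymm, Matrix.posDef_iff_dotProduct_mulVec.mpr ⟨?_, ?_⟩⟩
  · rw [Matrix.IsHermitian, Matrix.conjTranspose_eq_transpose_of_trivial]; exact hsymm
  · intro x hx
    obtain ⟨C, hCsq, hCh⟩ : ∃ C : Matrix (Fin p) (Fin p) ℝ, C * C = X ∧ C.IsHermitian := by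
      open scoped MatrixOrder in
      exact ⟨CFC.sqrt X, CFC.sqrt_mul_sqrt_self X hXpd.posSemidef.nonneg,
        (CFC.sqrt_nonneg X).posSemidef.isHermitian⟩
    have hCsymm : ∀ i j, C i j = C j i := fun i j => by
      have := congrFun (congrFun hCh j) i
      simpa [Matrix.conjTranspose_apply] using this
    have hXC : ∀ i j, X i j = ∑ m, C m i * C m j := by
      intro i j
      rw [← hCsq, Matrix.mul_apply]
      exact Finset.sum_congr rfl fun m _ => by rw [hCsymm i m]
    set w : Fin p → (Fin p × Fin f → ℝ) := fun m jk => C m jk.1 * x jk.2 with hw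
    -- the main quadratic form identity
    have main : star x ⬝ᵥ Bhat *ᵥ x
        = (p:ℝ)⁻¹ * ∑ m, star (w m) ⬝ᵥ S *ᵥ (w m) := by
      have lhs1 : star x ⬝ᵥ Bhat *ᵥ x
          = (p:ℝ)⁻¹ * ∑ k, ∑ l, ∑ i, ∑ j, X i j * S (j,k) (i,l) * (x k * x l) := by
        simp only [star_trivial, dotProduct, mulVec, key]
        rw [Finset.mul_sum]
        refine Finset.sum_congr rfl fun k _ => ?_
        rw [Finset.mul_sum, Finset.mul_sum]
        refine Finset.sum_congr rfl fun l _ => ?_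
        have h1 : (∑ i, ∑ j, X i j * S (j,k) (i,l) * (x k * x l))
            = (∑ i, ∑ j, X i j * S (j,k) (i,l)) * (x k * x l) := by
          rw [Finset.sum_mul]
          exact Finset.sum_congr rfl fun i _ => by rw [Finset.sum_mul]
        rw [h1]
        ring
      have rhs1 : ∑ m, star (w m) ⬝ᵥ S *ᵥ (w m)
          = ∑ m, ∑ j, ∑ k, ∑ i, ∑ l,
              (C m j * x k) * (S (j,k) (i,l) * (C m i * x l)) := by
        refine Finset.sum_congr rfl fun m _ => ?_
        simp only [star_trivial, dotProduct, mulVec, hw, Fintype.sum_prod_type]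
        refine Finset.sum_congr rfl fun j _ => Finset.sum_congr rfl fun k _ => ?_
        rw [Finset.mul_sum]
        refine Finset.sum_congr rfl fun i _ => ?_
        rw [Finset.mul_sum]
      -- move the m-sum to the inside
      have rhs2 : ∑ m, ∑ j, ∑ k, ∑ i, ∑ l,
              (C m j * x k) * (S (j,k) (i,l) * (C m i * x l))
          = ∑ j, ∑ k, ∑ i, ∑ l, X j i * (x k * S (j,k) (i,l) * x l) := by
        calc ∑ m, ∑ j, ∑ k, ∑ i, ∑ l,
                (C m j * x k) * (S (j,k) (i,l) * (C m i * x l))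
            = ∑ j, ∑ m, ∑ k, ∑ i, ∑ l,
                (C m j * x k) * (S (j,k) (i,l) * (C m i * x l)) := Finset.sum_comm
          _ = ∑ j, ∑ k, ∑ m, ∑ i, ∑ l,
                (C m j * x k) * (S (j,k) (i,l) * (C m i * x l)) :=
              Finset.sum_congr rfl fun j _ => Finset.sum_comm
          _ = ∑ j, ∑ k, ∑ i, ∑ m, ∑ l,
                (C m j * x k) * (S (j,k) (i,l) * (C m i * x l)) :=
              Finset.sum_congr rfl fun j _ => Finset.sum_congr rfl fun k _ =>
                Finset.sum_comm
          _ = ∑ j, ∑ k, ∑ i, ∑ l, ∑ m,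
                (C m j * x k) * (S (j,k) (i,l) * (C m i * x l)) :=
              Finset.sum_congr rfl fun j _ => Finset.sum_congr rfl fun k _ =>
                Finset.sum_congr rfl fun i _ => Finset.sum_comm
          _ = ∑ j, ∑ k, ∑ i, ∑ l, X j i * (x k * S (j,k) (i,l) * x l) := by
              refine Finset.sum_congr rfl fun j _ => Finset.sum_congr rfl fun k _ =>
                Finset.sum_congr rfl fun i _ => Finset.sum_congr rfl fun l _ => ?_
              rw [hXC j i, Finset.sum_mul]
              exact Finset.sum_congr rfl fun m _ => by ring
      -- reorder the left-hand quadruple sum to match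
      have lhs2 : ∑ k, ∑ l, ∑ i, ∑ j, X i j * S (j,k) (i,l) * (x k * x l)
          = ∑ j, ∑ k, ∑ i, ∑ l, X j i * (x k * S (j,k) (i,l) * x l) := by
        calc ∑ k, ∑ l, ∑ i, ∑ j, X i j * S (j,k) (i,l) * (x k * x l)
            = ∑ k, ∑ i, ∑ l, ∑ j, X i j * S (j,k) (i,l) * (x k * x l) :=
              Finset.sum_congr rfl fun k _ => Finset.sum_comm
          _ = ∑ i, ∑ k, ∑ l, ∑ j, X i j * S (j,k) (i,l) * (x k * x l) := Finset.sum_comm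
          _ = ∑ i, ∑ k, ∑ j, ∑ l, X i j * S (j,k) (i,l) * (x k * x l) :=
              Finset.sum_congr rfl fun i _ => Finset.sum_congr rfl fun k _ =>
                Finset.sum_comm
          _ = ∑ i, ∑ j, ∑ k, ∑ l, X i j * S (j,k) (i,l) * (x k * x l) :=
              Finset.sum_congr rfl fun i _ => Finset.sum_comm
          _ = ∑ j, ∑ i, ∑ k, ∑ l, X i j * S (j,k) (i,l) * (x k * x l) := Finset.sum_comm
          _ = ∑ j, ∑ k, ∑ i, ∑ l, X i j * S (j,k) (i,l) * (x k * x l) :=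
              Finset.sum_congr rfl fun j _ => Finset.sum_comm
          _ = ∑ j, ∑ k, ∑ i, ∑ l, X j i * (x k * S (j,k) (i,l) * x l) := by
              refine Finset.sum_congr rfl fun j _ => Finset.sum_congr rfl fun k _ =>
                Finset.sum_congr rfl fun i _ => Finset.sum_congr rfl fun l _ => ?_
              rw [← hX.apply i j]
              ring
      rw [lhs1, rhs1, rhs2, lhs2]
    rw [main]
    have hppos : (0:ℝ) < (p:ℝ)⁻¹ := by
      have : (0:ℝ) < (p:ℝ) := by exact_mod_cast hp
      exact inv_pos.2 this
    refine mul_pos hppos ?_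
    obtain ⟨k0, hk0⟩ := Function.ne_iff.mp hx
    have hj0 : ∃ m : Fin p, C m ⟨0, hp⟩ ≠ 0 := by
      by_contra h
      push_neg at h
      have hzero : X ⟨0, hp⟩ ⟨0, hp⟩ = 0 := by
        rw [hXC]
        simp [h]
      have hpos : 0 < star (Pi.single (⟨0, hp⟩ : Fin p) (1:ℝ)) ⬝ᵥ
          X *ᵥ Pi.single (⟨0, hp⟩ : Fin p) (1:ℝ) := by
        refine hXpd.dotProduct_mulVec_pos ?_
        intro hc
        have := congrFun hc ⟨0, hp⟩
        simp at this
      have heq : star (Pi.single (⟨0, hp⟩ : Fin p) (1:ℝ)) ⬝ᵥ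
          X *ᵥ Pi.single (⟨0, hp⟩ : Fin p) (1:ℝ) = X ⟨0, hp⟩ ⟨0, hp⟩ := by
        simp [dotProduct, mulVec, Pi.single_apply, Finset.sum_ite_eq,
          Finset.sum_ite_eq']
      rw [heq, hzero] at hpos
      exact lt_irrefl _ hpos
    obtain ⟨m0, hm0⟩ := hj0
    refine Finset.sum_pos' (fun m _ => hSpd.posSemidef.dotProduct_mulVec_nonneg (w m)) ⟨m0, Finset.mem_univ m0, ?_⟩
    refine hSpd.dotProduct_mulVec_pos (x := w m0) ?_
    intro hc
    have := congrFun hc (⟨0, hp⟩, k0)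
    simp only [hw, Pi.zero_apply] at this
    rcases mul_eq_zero.mp this with h1 | h2
    · exact hm0 h1
    · exact hk0 h2
end

section
/- Let S be a symmetric positive definite pf×pf real matrix and X a symmetric positive definite p×p real matrix, and set M = (1/p)·Σ_{i,j=1}^p X_{ij}·S(j,i). Then M is invertible and Y = M⁻¹ is the unique minimizer over symmetric positive definite f×f matrices Y of the function Y ↦ tr((X⊗Y)S) − p·log det Y. -/
open Matrix Real
open scoped Kronecker BigOperators

/-- For a positive definite matrix `A`, we have `f ≤ tr A − log det A`,
with equality only when `A = 1`. -/
lemma key_scalar {f : ℕ} {A : Matrix (Fin f) (Fin f) ℝ} (hA : A.PosDef) :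
    ((f : ℝ) ≤ A.trace - Real.log A.det) ∧
      (A.trace - Real.log A.det ≤ (f : ℝ) → A = 1) := by
  have hH := hA.isHermitian
  set lam := hH.eigenvalues with hlam
  have hpos : ∀ i, 0 < lam i := fun i => hA.eigenvalues_pos i
  have htr : A.trace = ∑ i, lam i := by
    conv_lhs => rw [hH.spectral_theorem]
    rw [Unitary.conjStarAlgAut_apply, Matrix.trace_mul_cycle]
    rw [(Matrix.mem_unitaryGroup_iff').mp hH.eigenvectorUnitary.2]
    simp [Matrix.trace_diagonal, hlam]
  have hdet : A.det = ∏ i, lam i := by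
    simpa using hH.det_eq_prod_eigenvalues
  have hlog : Real.log A.det = ∑ i, Real.log (lam i) := by
    rw [hdet, Real.log_prod]
    exact fun i _ => (hpos i).ne'
  have hterm : ∀ i, (1:ℝ) ≤ lam i - Real.log (lam i) := by
    intro i
    have := Real.log_le_sub_one_of_pos (hpos i)
    linarith
  have hsum : A.trace - Real.log A.det = ∑ i, (lam i - Real.log (lam i)) := by
    rw [htr, hlog, Finset.sum_sub_distrib]
  constructor
  · rw [hsum]
    calc (f:ℝ) = ∑ _i : Fin f, (1:ℝ) := by simp
    _ ≤ _ := Finset.sum_le_sum (fun i _ => hterm i)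
  · intro hle
    have hone : ∀ i, lam i = 1 := by
      intro i
      by_contra hne
      have hi : (1:ℝ) < lam i - Real.log (lam i) := by
        have := Real.log_lt_sub_one_of_pos (hpos i) hne
        linarith
      have : (f:ℝ) < ∑ j, (lam j - Real.log (lam j)) := by
        calc (f:ℝ) = ∑ _j : Fin f, (1:ℝ) := by simp
        _ < _ := by
          apply Finset.sum_lt_sum (fun j _ => hterm j) ⟨i, Finset.mem_univ i, hi⟩
      rw [hsum] at hle
      linarith
    rw [hH.spectral_theorem]
    have h2 : Matrix.diagonal (RCLike.ofReal ∘ lam) = (1 : Matrix (Fin f) (Fin f) ℝ) := by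
      have h3 : (RCLike.ofReal ∘ lam : Fin f → ℝ) = fun _ => 1 := by
        funext i; simp [hone i]
      rw [h3, Matrix.diagonal_one]
    rw [h2, Unitary.conjStarAlgAut_apply, Matrix.mul_one]
    exact (Matrix.mem_unitaryGroup_iff).mp hH.eigenvectorUnitary.2

/-- For positive definite `M`, `Y ↦ tr(YM) − log det Y` is minimized uniquely at `Y = M⁻¹`. -/
lemma key_matrix {f : ℕ} {M Y : Matrix (Fin f) (Fin f) ℝ} (hM : M.PosDef) (hY : Y.PosDef) :
    ((f : ℝ) + Real.log M.det ≤ (Y * M).trace - Real.log Y.det) ∧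
      ((Y * M).trace - Real.log Y.det ≤ (f : ℝ) + Real.log M.det → Y = M⁻¹) := by
  set R := (open scoped MatrixOrder in CFC.sqrt M) with hRdef
  have hRps : R.PosSemidef :=
    (open scoped MatrixOrder in Matrix.nonneg_iff_posSemidef.mp (CFC.sqrt_nonneg M))
  have hRR : R * R = M :=
    (open scoped MatrixOrder in CFC.sqrt_mul_sqrt_self M hM.posSemidef.nonneg)
  have hdetM : 0 < M.det := hM.det_pos
  have hdetY : 0 < Y.det := hY.det_pos
  have hdetR : R.det * R.det = M.det := by rw [← Matrix.det_mul, hRR]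
  have hdetRne : R.det ≠ 0 := by
    intro h; rw [h, mul_zero] at hdetR; exact hdetM.ne' hdetR.symm
  have hRunit : IsUnit R.det := isUnit_iff_ne_zero.mpr hdetRne
  have hA : (R * Y * R).PosDef := by
    refine Matrix.PosDef.of_dotProduct_mulVec_pos ?_ ?_
    · show (R * Y * R)ᴴ = R * Y * R
      rw [Matrix.conjTranspose_mul, Matrix.conjTranspose_mul, hRps.1.eq, hY.1.eq,
        Matrix.mul_assoc]
    · intro x hx
      have hx2 : R *ᵥ x ≠ 0 := by
        intro h0
        apply hx
        have h1 := congrArg (fun v => R⁻¹ *ᵥ v) h0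
        simpa [Matrix.mulVec_mulVec, Matrix.nonsing_inv_mul R hRunit] using h1
      simpa only [star_mulVec, Matrix.dotProduct_mulVec, Matrix.vecMul_vecMul,
        hRps.1.eq, Matrix.mul_assoc] using hY.dotProduct_mulVec_pos hx2
  have htrA : (R * Y * R).trace = (Y * M).trace := by
    rw [Matrix.trace_mul_cycle, hRR, Matrix.trace_mul_comm]
  have hdetA : (R * Y * R).det = Y.det * M.det := by
    rw [Matrix.det_mul, Matrix.det_mul, ← hdetR]; ring
  have hlogA : Real.log (R * Y * R).det = Real.log Y.det + Real.log M.det := by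
    rw [hdetA, Real.log_mul hdetY.ne' hdetM.ne']
  obtain ⟨hge, heq⟩ := key_scalar hA
  constructor
  · rw [htrA, hlogA] at hge; linarith
  · intro hle
    have h1 : (R * Y * R).trace - Real.log (R * Y * R).det ≤ (f : ℝ) := by
      rw [htrA, hlogA]; linarith
    have h2 : R * Y * R = 1 := heq h1
    have h3 : R⁻¹ * (R * Y * R) * R⁻¹ = R⁻¹ * R⁻¹ := by rw [h2, Matrix.mul_one]
    have h4 : R⁻¹ * (R * Y * R) * R⁻¹ = Y := by
      rw [← Matrix.mul_assoc, ← Matrix.mul_assoc, Matrix.nonsing_inv_mul R hRunit,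
        Matrix.one_mul, Matrix.mul_assoc, Matrix.mul_nonsing_inv R hRunit, Matrix.mul_one]
    rw [← h4, h3, ← Matrix.mul_inv_rev, hRR]

/-- The trace identity `tr((X ⊗ Y)S) = tr(Y·Σᵢⱼ Xᵢⱼ S(j,i))`. -/
lemma trace_id {p f : ℕ} (S : Matrix (Fin p × Fin f) (Fin p × Fin f) ℝ)
    (X : Matrix (Fin p) (Fin p) ℝ) (Y : Matrix (Fin f) (Fin f) ℝ) :
    Matrix.trace ((X ⊗ₖ Y) * S)
      = (Y * ∑ i : Fin p, ∑ j : Fin p, X i j • S.blockSub j i).trace := by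
  simp only [Matrix.trace, Matrix.diag, Matrix.mul_apply, Matrix.kroneckerMap_apply,
    Matrix.sum_apply, Matrix.smul_apply, smul_eq_mul, Fintype.sum_prod_type, Matrix.blockSub,
    Finset.mul_sum, Finset.sum_mul]
  calc
    ∑ i : Fin p, ∑ k : Fin f, ∑ j : Fin p, ∑ l : Fin f,
        X i j * Y k l * S (j, l) (i, k)
      = ∑ k : Fin f, ∑ i : Fin p, ∑ j : Fin p, ∑ l : Fin f,
        X i j * Y k l * S (j, l) (i, k) := Finset.sum_comm
    _ = ∑ k : Fin f, ∑ i : Fin p, ∑ l : Fin f, ∑ j : Fin p,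
        X i j * Y k l * S (j, l) (i, k) :=
        Finset.sum_congr rfl fun k _ => Finset.sum_congr rfl fun i _ => Finset.sum_comm
    _ = ∑ k : Fin f, ∑ l : Fin f, ∑ i : Fin p, ∑ j : Fin p,
        X i j * Y k l * S (j, l) (i, k) :=
        Finset.sum_congr rfl fun k _ => Finset.sum_comm
    _ = ∑ k : Fin f, ∑ l : Fin f, ∑ i : Fin p, ∑ j : Fin p,
        Y k l * (X i j * S (j, l) (i, k)) := by
        refine Finset.sum_congr rfl fun k _ => Finset.sum_congr rfl fun l _ =>
          Finset.sum_congr rfl fun i _ => Finset.sum_congr rfl fun j _ => by ring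

/-- The averaged block matrix is positive definite. -/
lemma posDefM {p f : ℕ} (hp : 1 ≤ p) (hf : 1 ≤ f)
    (S : Matrix (Fin p × Fin f) (Fin p × Fin f) ℝ) (hS : S.IsSymm) (hSpd : S.PosDef)
    (X : Matrix (Fin p) (Fin p) ℝ) (hX : X.IsSymm) (hXpd : X.PosDef) :
    (((p : ℝ)⁻¹ • ∑ i : Fin p, ∑ j : Fin p, X i j • S.blockSub j i) :
      Matrix (Fin f) (Fin f) ℝ).PosDef := by
  have hppos : (0:ℝ) < (p:ℝ)⁻¹ := by positivity
  set T : Matrix (Fin f) (Fin f) ℝ := ∑ i : Fin p, ∑ j : Fin p, X i j • S.blockSub j i with hT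
  set R := (open scoped MatrixOrder in CFC.sqrt X) with hR
  have hRps : R.PosSemidef :=
    (open scoped MatrixOrder in Matrix.nonneg_iff_posSemidef.mp (CFC.sqrt_nonneg X))
  have hRR : R * R = X :=
    (open scoped MatrixOrder in CFC.sqrt_mul_sqrt_self X hXpd.posSemidef.nonneg)
  have hRsymm : ∀ a b, R a b = R b a := by
    intro a b
    have h := hRps.1.apply b a
    rwa [star_trivial] at h
  -- entries of T
  have hTapp : ∀ k l, T k l = ∑ i : Fin p, ∑ j : Fin p, X i j * S (j, k) (i, l) := by
    intro k l
    simp [hT, Matrix.sum_apply, Matrix.blockSub]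
  refine Matrix.PosDef.of_dotProduct_mulVec_pos ?_ ?_
  · show ((p : ℝ)⁻¹ • T)ᴴ = (p : ℝ)⁻¹ • T
    have hTsymm : Tᴴ = T := by
      ext k l
      show star (T l k) = T k l
      rw [star_trivial, hTapp, hTapp]
      calc
        ∑ i : Fin p, ∑ j : Fin p, X i j * S (j, l) (i, k)
          = ∑ a : Fin p, ∑ b : Fin p, X b a * S (a, l) (b, k) := Finset.sum_comm
        _ = ∑ i : Fin p, ∑ j : Fin p, X i j * S (j, k) (i, l) := by
            refine Finset.sum_congr rfl fun a _ => Finset.sum_congr rfl fun b _ => ?_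
            rw [hX.apply a b, hS.apply (b, k) (a, l)]
    rw [Matrix.conjTranspose_smul, hTsymm]
    norm_num
  · intro x hx
    set B : Fin p → Fin p → ℝ := fun j i => x ⬝ᵥ (S.blockSub j i) *ᵥ x with hB
    set u : Fin p → (Fin p × Fin f) → ℝ := fun r q => R r q.1 * x q.2 with hu
    have hXentry : ∀ i j, X i j = ∑ r : Fin p, R r i * R r j := by
      intro i j
      rw [← hRR, Matrix.mul_apply]
      exact Finset.sum_congr rfl fun r _ => by rw [hRsymm i r]
    -- expand LHS
    have hL : x ⬝ᵥ T *ᵥ x = ∑ i : Fin p, ∑ j : Fin p, X i j * B j i := by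
      simp only [dotProduct, Matrix.mulVec, hB, Matrix.blockSub, hTapp,
        Finset.mul_sum, Finset.sum_mul]
      calc
        ∑ k : Fin f, ∑ l : Fin f, ∑ i : Fin p, ∑ j : Fin p,
            x k * (X i j * S (j, k) (i, l) * x l)
          = ∑ k : Fin f, ∑ i : Fin p, ∑ l : Fin f, ∑ j : Fin p,
            x k * (X i j * S (j, k) (i, l) * x l) :=
            Finset.sum_congr rfl fun k _ => Finset.sum_comm
        _ = ∑ i : Fin p, ∑ k : Fin f, ∑ l : Fin f, ∑ j : Fin p,
            x k * (X i j * S (j, k) (i, l) * x l) := Finset.sum_comm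
        _ = ∑ i : Fin p, ∑ k : Fin f, ∑ j : Fin p, ∑ l : Fin f,
            x k * (X i j * S (j, k) (i, l) * x l) :=
            Finset.sum_congr rfl fun i _ => Finset.sum_congr rfl fun k _ => Finset.sum_comm
        _ = ∑ i : Fin p, ∑ j : Fin p, ∑ k : Fin f, ∑ l : Fin f,
            x k * (X i j * S (j, k) (i, l) * x l) :=
            Finset.sum_congr rfl fun i _ => Finset.sum_comm
        _ = ∑ i : Fin p, ∑ j : Fin p, ∑ k : Fin f, ∑ l : Fin f,
            X i j * (x k * (S (j, k) (i, l) * x l)) := by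
            refine Finset.sum_congr rfl fun i _ => Finset.sum_congr rfl fun j _ =>
              Finset.sum_congr rfl fun k _ => Finset.sum_congr rfl fun l _ => by ring
    -- expand each term on RHS
    have hR1 : ∀ r : Fin p, (u r) ⬝ᵥ S *ᵥ (u r)
        = ∑ j : Fin p, ∑ i : Fin p, R r j * R r i * B j i := by
      intro r
      simp only [dotProduct, Matrix.mulVec, hB, hu, Matrix.blockSub,
        Fintype.sum_prod_type, Finset.mul_sum, Finset.sum_mul]
      refine Finset.sum_congr rfl fun j _ => ?_
      calc
        ∑ k : Fin f, ∑ i : Fin p, ∑ l : Fin f,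
            R r j * x k * (S (j, k) (i, l) * (R r i * x l))
          = ∑ i : Fin p, ∑ k : Fin f, ∑ l : Fin f,
            R r j * x k * (S (j, k) (i, l) * (R r i * x l)) := Finset.sum_comm
        _ = ∑ i : Fin p, ∑ k : Fin f, ∑ l : Fin f,
            R r j * R r i * (x k * (S (j, k) (i, l) * x l)) := by
            refine Finset.sum_congr rfl fun i _ => Finset.sum_congr rfl fun k _ =>
              Finset.sum_congr rfl fun l _ => by ring
    have key : x ⬝ᵥ T *ᵥ x = ∑ r : Fin p, (u r) ⬝ᵥ S *ᵥ (u r) := by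
      rw [hL]
      calc
        ∑ i : Fin p, ∑ j : Fin p, X i j * B j i
          = ∑ j : Fin p, ∑ i : Fin p, X i j * B j i := Finset.sum_comm
        _ = ∑ j : Fin p, ∑ i : Fin p, ∑ r : Fin p, R r j * R r i * B j i := by
            refine Finset.sum_congr rfl fun j _ => Finset.sum_congr rfl fun i _ => ?_
            rw [← hX.apply i j, hXentry j i, Finset.sum_mul]
        _ = ∑ j : Fin p, ∑ r : Fin p, ∑ i : Fin p, R r j * R r i * B j i :=
            Finset.sum_congr rfl fun j _ => Finset.sum_comm
        _ = ∑ r : Fin p, ∑ j : Fin p, ∑ i : Fin p, R r j * R r i * B j i := Finset.sum_comm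
        _ = ∑ r : Fin p, (u r) ⬝ᵥ S *ᵥ (u r) :=
            Finset.sum_congr rfl fun r _ => (hR1 r).symm
    -- strict positivity
    have hnonneg : ∀ r : Fin p, 0 ≤ (u r) ⬝ᵥ S *ᵥ (u r) := by
      intro r
      have := hSpd.posSemidef.dotProduct_mulVec_nonneg (u r)
      rwa [star_trivial] at this
    obtain ⟨k0, hk0⟩ : ∃ k0, x k0 ≠ 0 := Function.ne_iff.mp hx
    have hRne : R ≠ 0 := by
      intro h0
      have hX0 : X = 0 := by rw [← hRR, h0, Matrix.mul_zero]
      obtain ⟨i0⟩ : Nonempty (Fin p) := ⟨⟨0, hp⟩⟩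
      have hpos := hXpd.dotProduct_mulVec_pos (x := Pi.single i0 1) (by
        intro hc
        have := congrFun hc i0
        simp [Pi.single_apply] at this)
      rw [hX0] at hpos
      simp at hpos
    obtain ⟨r0, j0, hr0⟩ : ∃ r j, R r j ≠ 0 := by
      by_contra hc
      push_neg at hc
      exact hRne (by ext a b; exact hc a b)
    have hur0 : u r0 ≠ 0 := by
      intro h0
      have := congrFun h0 (j0, k0)
      simp only [hu, Pi.zero_apply] at this
      exact (mul_ne_zero hr0 hk0) this
    have hpos0 : 0 < (u r0) ⬝ᵥ S *ᵥ (u r0) := by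
      have := hSpd.dotProduct_mulVec_pos hur0
      rwa [star_trivial] at this
    have hTpos : 0 < x ⬝ᵥ T *ᵥ x := by
      rw [key]
      exact Finset.sum_pos' (fun r _ => hnonneg r) ⟨r0, Finset.mem_univ r0, hpos0⟩
    show 0 < star x ⬝ᵥ ((p : ℝ)⁻¹ • T) *ᵥ x
    rw [star_trivial]
    have hsm : ((p : ℝ)⁻¹ • T) *ᵥ x = (p : ℝ)⁻¹ • (T *ᵥ x) := by
      rw [Matrix.smul_mulVec]
    rw [hsm, dotProduct_smul, smul_eq_mul]
    positivity

/-- `M = (1/p)·Σ_{i,j} X_{ij}·S(j,i)` is invertible and `M⁻¹` is the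
unique minimizer of `Y ↦ tr((X⊗Y)S) − p·log det Y` over symmetric positive definite
`f × f` matrices. -/
theorem stmt3 (p f : ℕ) (hp : 1 ≤ p) (hf : 1 ≤ f)
    (S : Matrix (Fin p × Fin f) (Fin p × Fin f) ℝ) (hS : S.IsSymm) (hSpd : S.PosDef)
    (X : Matrix (Fin p) (Fin p) ℝ) (hX : X.IsSymm) (hXpd : X.PosDef)
    (M : Matrix (Fin f) (Fin f) ℝ)
    (hM : M = (p : ℝ)⁻¹ • ∑ i : Fin p, ∑ j : Fin p, X i j • S.blockSub j i) :
    IsUnit M ∧ M⁻¹.IsSymm ∧ M⁻¹.PosDef ∧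
      (∀ Y : Matrix (Fin f) (Fin f) ℝ, Y.IsSymm → Y.PosDef →
        (Matrix.trace ((X ⊗ₖ M⁻¹) * S) - (p : ℝ) * Real.log M⁻¹.det
          ≤ Matrix.trace ((X ⊗ₖ Y) * S) - (p : ℝ) * Real.log Y.det) ∧
        (Matrix.trace ((X ⊗ₖ Y) * S) - (p : ℝ) * Real.log Y.det
          ≤ Matrix.trace ((X ⊗ₖ M⁻¹) * S) - (p : ℝ) * Real.log M⁻¹.det → Y = M⁻¹)) := by
  have hppos : (0:ℝ) < (p:ℝ) := by positivity
  have hpne : (p:ℝ) ≠ 0 := hppos.ne'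
  have hMpd : M.PosDef := hM ▸ posDefM hp hf S hS hSpd X hX hXpd
  have hMinvPd : M⁻¹.PosDef := hMpd.inv
  have hMinvSymm : M⁻¹.IsSymm := by
    have h := hMinvPd.isHermitian
    rwa [Matrix.IsHermitian, Matrix.conjTranspose_eq_transpose_of_trivial] at h
  have hMdetUnit : IsUnit M.det := isUnit_iff_ne_zero.mpr hMpd.det_pos.ne'
  -- trace identity specialized via hM
  have hTM : (∑ i : Fin p, ∑ j : Fin p, X i j • S.blockSub j i) = (p:ℝ) • M := by
    rw [hM, smul_smul, mul_inv_cancel₀ hpne, one_smul]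
  have htr : ∀ Y : Matrix (Fin f) (Fin f) ℝ,
      Matrix.trace ((X ⊗ₖ Y) * S) = (p:ℝ) * (Y * M).trace := by
    intro Y
    rw [trace_id S X Y, hTM, Matrix.mul_smul, Matrix.trace_smul, smul_eq_mul]
  -- value at M⁻¹
  have hval : (M⁻¹ * M).trace - Real.log M⁻¹.det = (f:ℝ) + Real.log M.det := by
    rw [Matrix.nonsing_inv_mul M hMdetUnit, Matrix.trace_one, Matrix.det_nonsing_inv,
      Ring.inverse_eq_inv', Real.log_inv]
    simp
  refine ⟨hMpd.isUnit, hMinvSymm, hMinvPd, fun Y hYsymm hYpd => ?_⟩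
  obtain ⟨hge, heq⟩ := key_matrix hMpd hYpd
  constructor
  · rw [htr Y, htr M⁻¹]
    have h1 : (p:ℝ) * ((M⁻¹ * M).trace - Real.log M⁻¹.det)
        ≤ (p:ℝ) * ((Y * M).trace - Real.log Y.det) := by
      apply mul_le_mul_of_nonneg_left _ hppos.le
      rw [hval]; exact hge
    nlinarith [h1]
  · intro hle
    apply heq
    rw [htr Y, htr M⁻¹] at hle
    have h2 : (p:ℝ) * ((Y * M).trace - Real.log Y.det)
        ≤ (p:ℝ) * ((M⁻¹ * M).trace - Real.log M⁻¹.det) := by nlinarith [hle]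
    rw [hval] at h2
    exact le_of_mul_le_mul_left h2 hppos
end

section
/- Let Ŝ be a symmetric positive definite pf×pf real matrix and λ̄_X, λ̄_Y ≥ 0. Then the penalized objective J_λ(X,Y) = tr((X⊗Y)Ŝ) − f·log det X − p·log det Y + λ̄_X|X|₁ + λ̄_Y|Y|₁ is bounded below over all pairs of symmetric positive definite matrices X (p×p) and Y (f×f); that is, inf_{X,Y} J_λ(X,Y) > −∞. -/
open Matrix Real
open scoped Kronecker BigOperators

/-- `|M|₁`: the sum of the absolute values of all entries of a matrix. -/
noncomputable def Matrix.entrywiseL1 {m n : Type*} [Fintype m] [Fintype n]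
    (M : Matrix m n ℝ) : ℝ := ∑ i, ∑ j, |M i j|

section Aux

variable {ι : Type*} [Fintype ι] [DecidableEq ι]

lemma aux_trace_eq_sum_eigenvalues {A : Matrix ι ι ℝ} (hA : A.IsHermitian) :
    A.trace = ∑ i, hA.eigenvalues i := by
  conv_lhs => rw [hA.spectral_theorem]
  rw [Unitary.conjStarAlgAut_apply, Matrix.trace_mul_cycle,
    (Matrix.mem_unitaryGroup_iff').mp (hA.eigenvectorUnitary).2, Matrix.one_mul,
    Matrix.trace_diagonal]
  simp

lemma aux_psd_trace_nonneg {A : Matrix ι ι ℝ} (hA : A.PosSemidef) : 0 ≤ A.trace := by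
  rw [aux_trace_eq_sum_eigenvalues hA.1]
  exact Finset.sum_nonneg fun i _ => hA.eigenvalues_nonneg i

lemma aux_pd_trace_pos [Nonempty ι] {A : Matrix ι ι ℝ} (hA : A.PosDef) : 0 < A.trace := by
  rw [aux_trace_eq_sum_eigenvalues hA.1]
  exact Finset.sum_pos (fun i _ => hA.eigenvalues_pos i) Finset.univ_nonempty

open scoped MatrixOrder in
lemma aux_psd_eq_conjTranspose_mul_self {n : Type*} [Fintype n] [DecidableEq n]
    {A : Matrix n n ℝ} (hA : A.PosSemidef) : ∃ B : Matrix n n ℝ, A = Bᴴ * B := by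
  have h0 : 0 ≤ A := Matrix.nonneg_iff_posSemidef.mpr hA
  obtain ⟨X, hX, -, hXA⟩ := CFC.exists_sqrt_of_isSelfAdjoint_of_quasispectrumRestricts
    (IsSelfAdjoint.of_nonneg h0) (QuasispectrumRestricts.nnreal_of_nonneg h0)
  refine ⟨X, ?_⟩
  rw [← hXA]
  congr 1
  exact hX.star_eq.symm

lemma aux_trace_mul_nonneg {M S : Matrix ι ι ℝ} (hM : M.PosSemidef) (hS : S.PosSemidef) :
    0 ≤ (M * S).trace := by
  obtain ⟨B, rfl⟩ := aux_psd_eq_conjTranspose_mul_self hM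
  rw [Matrix.mul_assoc, Matrix.trace_mul_comm]
  exact aux_psd_trace_nonneg ((hS.mul_mul_conjTranspose_same B))

lemma aux_exists_pos_sub_smul_psd {S : Matrix ι ι ℝ} (hS : S.PosDef) :
    ∃ c : ℝ, 0 < c ∧ (S - c • 1).PosSemidef := by
  cases isEmpty_or_nonempty ι with
  | inl h =>
    refine ⟨1, one_pos, ⟨Subsingleton.elim _ _, fun x => ?_⟩⟩
    simp [Subsingleton.elim x 0]
  | inr h =>
    set c := Finset.univ.inf' Finset.univ_nonempty hS.1.eigenvalues with hc
    have hcpos : 0 < c := by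
      rw [hc, Finset.lt_inf'_iff]
      exact fun i _ => hS.eigenvalues_pos i
    have hU : (S - c • 1) =
        (hS.1.eigenvectorUnitary : Matrix ι ι ℝ) *
          (Matrix.diagonal (fun i => hS.1.eigenvalues i - c)) *
          (star (hS.1.eigenvectorUnitary : Matrix ι ι ℝ)) := by
      conv_lhs => rw [hS.1.spectral_theorem]
      have h1 : (hS.1.eigenvectorUnitary : Matrix ι ι ℝ) * (c • (1 : Matrix ι ι ℝ)) *
          (star (hS.1.eigenvectorUnitary : Matrix ι ι ℝ)) = c • (1 : Matrix ι ι ℝ) := by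
        rw [Matrix.mul_smul, Matrix.mul_one, Matrix.smul_mul,
          (Matrix.mem_unitaryGroup_iff).mp (hS.1.eigenvectorUnitary).2]
      rw [Unitary.conjStarAlgAut_apply, ← h1, ← Matrix.sub_mul, ← Matrix.mul_sub]
      congr 1
      rw [Matrix.smul_one_eq_diagonal, Matrix.diagonal_sub]
      congr 1
    refine ⟨c, hcpos, ?_⟩
    rw [hU]
    refine (Matrix.posSemidef_diagonal_iff.mpr fun i => ?_).mul_mul_conjTranspose_same _
    have : c ≤ hS.1.eigenvalues i := Finset.inf'_le _ (Finset.mem_univ i)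
    linarith

lemma aux_psd_kronecker {m n : Type*} [Fintype m] [DecidableEq m] [Fintype n] [DecidableEq n]
    {X : Matrix m m ℝ} {Y : Matrix n n ℝ} (hX : X.PosSemidef) (hY : Y.PosSemidef) :
    (X ⊗ₖ Y).PosSemidef := by
  obtain ⟨A, rfl⟩ := aux_psd_eq_conjTranspose_mul_self hX
  obtain ⟨B, rfl⟩ := aux_psd_eq_conjTranspose_mul_self hY
  suffices hAB : (Aᴴ * A) ⊗ₖ (Bᴴ * B) = (A ⊗ₖ B)ᴴ * (A ⊗ₖ B) by
    rw [hAB]; exact Matrix.posSemidef_conjTranspose_mul_self (A ⊗ₖ B)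
  have hct : (A ⊗ₖ B)ᴴ = Aᴴ ⊗ₖ Bᴴ := by
    ext ⟨i, j⟩ ⟨k, l⟩
    simp [Matrix.conjTranspose_apply, Matrix.kroneckerMap_apply]
  rw [hct, ← Matrix.mul_kronecker_mul]

lemma aux_det_le_trace_pow {p : ℕ} {X : Matrix (Fin p) (Fin p) ℝ} (hX : X.PosDef) :
    X.det ≤ X.trace ^ p := by
  rw [hX.1.det_eq_prod_eigenvalues]
  have htr : X.trace = ∑ i, hX.1.eigenvalues i := aux_trace_eq_sum_eigenvalues hX.1
  calc (∏ i, (hX.1.eigenvalues i : ℝ))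
      ≤ ∏ _i : Fin p, X.trace := by
        refine Finset.prod_le_prod (fun i _ => (hX.eigenvalues_pos i).le) fun i _ => ?_
        rw [htr]
        exact Finset.single_le_sum (f := fun i => hX.1.eigenvalues i)
          (fun j _ => (hX.eigenvalues_pos j).le) (Finset.mem_univ i)
    _ = X.trace ^ p := by rw [Finset.prod_const, Finset.card_univ, Fintype.card_fin]

lemma aux_log_bound {c k u : ℝ} (hc : 0 < c) (hk : 0 ≤ k) (hu : 0 ≤ u)
    (h : k = 0 ∨ 0 < u) :
    k - k * Real.log (k / c) ≤ c * u - k * Real.log u := by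
  rcases eq_or_lt_of_le hk with hk0 | hk0
  · rw [← hk0]
    simpa using mul_nonneg hc.le hu
  · have hu' : 0 < u := h.resolve_left hk0.ne'
    have h1 : Real.log (c * u / k) ≤ c * u / k - 1 :=
      Real.log_le_sub_one_of_pos (by positivity)
    have heq : (c * u / k) * (k / c) = u := by field_simp
    have h2 : Real.log (c * u / k) + Real.log (k / c) = Real.log u := by
      rw [← Real.log_mul (by positivity) (by positivity), heq]
    have h3 : k * (c * u / k) = c * u := by field_simp
    have h4 : k * Real.log (c * u / k) ≤ k * (c * u / k - 1) :=
      mul_le_mul_of_nonneg_left h1 hk0.le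
    nlinarith [h2, h3, h4]

lemma aux_l1_nonneg {m n : Type*} [Fintype m] [Fintype n] (M : Matrix m n ℝ) :
    0 ≤ M.entrywiseL1 :=
  Finset.sum_nonneg fun i _ => Finset.sum_nonneg fun j _ => abs_nonneg _

end Aux

/-- the penalized objective `J_λ` is bounded below over pairs of
symmetric positive definite matrices when `Ŝ` is symmetric positive definite. -/
theorem stmt5 (p f : ℕ)
    (Shat : Matrix (Fin p × Fin f) (Fin p × Fin f) ℝ) (hS : Shat.IsSymm)
    (hSpd : Shat.PosDef)
    (lamX lamY : ℝ) (hlamX : 0 ≤ lamX) (hlamY : 0 ≤ lamY) :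
    ∃ L : ℝ, ∀ (X : Matrix (Fin p) (Fin p) ℝ) (Y : Matrix (Fin f) (Fin f) ℝ),
      X.IsSymm → X.PosDef → Y.IsSymm → Y.PosDef →
      L ≤ Matrix.trace ((X ⊗ₖ Y) * Shat)
            - (f : ℝ) * Real.log X.det - (p : ℝ) * Real.log Y.det
            + lamX * X.entrywiseL1 + lamY * Y.entrywiseL1 := by
  obtain ⟨c, hc, hpsd⟩ := aux_exists_pos_sub_smul_psd hSpd
  set k : ℝ := (p : ℝ) * f with hk
  refine ⟨k - k * Real.log (k / c), ?_⟩
  intro X Y hXs hXpd hYs hYpd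
  have hkron : (X ⊗ₖ Y).PosSemidef := aux_psd_kronecker hXpd.posSemidef hYpd.posSemidef
  -- trace lower bound
  have htrk : (X ⊗ₖ Y).trace = X.trace * Y.trace := Matrix.trace_kronecker X Y
  have htr0 : 0 ≤ (((X ⊗ₖ Y)) * (Shat - c • 1)).trace := aux_trace_mul_nonneg hkron hpsd
  have hsplit : ((X ⊗ₖ Y) * Shat).trace
      = (((X ⊗ₖ Y)) * (Shat - c • 1)).trace + c * (X.trace * Y.trace) := by
    rw [Matrix.mul_sub, Matrix.trace_sub, Matrix.mul_smul, Matrix.mul_one,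
      Matrix.trace_smul, smul_eq_mul, htrk]
    ring
  have hmain : c * (X.trace * Y.trace) ≤ ((X ⊗ₖ Y) * Shat).trace := by
    rw [hsplit]; linarith
  have hpenX : 0 ≤ lamX * X.entrywiseL1 := mul_nonneg hlamX (aux_l1_nonneg X)
  have hpenY : 0 ≤ lamY * Y.entrywiseL1 := mul_nonneg hlamY (aux_l1_nonneg Y)
  set u : ℝ := X.trace * Y.trace with hu
  have hune : 0 ≤ u :=
    mul_nonneg (aux_psd_trace_nonneg hXpd.posSemidef) (aux_psd_trace_nonneg hYpd.posSemidef)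
  -- bound the log terms
  have hlog : (f : ℝ) * Real.log X.det + (p : ℝ) * Real.log Y.det ≤ k * Real.log u := by
    rcases Nat.eq_zero_or_pos p with hp | hp
    · subst hp
      have hdX : X.det = 1 := Matrix.det_fin_zero
      simp [hdX, hk]
    · rcases Nat.eq_zero_or_pos f with hf | hf
      · subst hf
        have hdY : Y.det = 1 := Matrix.det_fin_zero
        simp [hdY, hk]
      · have : Nonempty (Fin p) := ⟨⟨0, hp⟩⟩
        have : Nonempty (Fin f) := ⟨⟨0, hf⟩⟩
        have htX : 0 < X.trace := aux_pd_trace_pos hXpd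
        have htY : 0 < Y.trace := aux_pd_trace_pos hYpd
        have hlX : Real.log X.det ≤ (p : ℝ) * Real.log X.trace := by
          calc Real.log X.det ≤ Real.log (X.trace ^ p) :=
                Real.log_le_log hXpd.det_pos (aux_det_le_trace_pow hXpd)
            _ = (p : ℝ) * Real.log X.trace := by rw [Real.log_pow]
        have hlY : Real.log Y.det ≤ (f : ℝ) * Real.log Y.trace := by
          calc Real.log Y.det ≤ Real.log (Y.trace ^ f) :=
                Real.log_le_log hYpd.det_pos (aux_det_le_trace_pow hYpd)
            _ = (f : ℝ) * Real.log Y.trace := by rw [Real.log_pow]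
        have hlu : Real.log u = Real.log X.trace + Real.log Y.trace :=
          Real.log_mul htX.ne' htY.ne'
        have hf0 : (0:ℝ) ≤ f := Nat.cast_nonneg f
        have hp0 : (0:ℝ) ≤ p := Nat.cast_nonneg p
        have h1 : (f : ℝ) * Real.log X.det ≤ (f : ℝ) * ((p : ℝ) * Real.log X.trace) :=
          mul_le_mul_of_nonneg_left hlX hf0
        have h2 : (p : ℝ) * Real.log Y.det ≤ (p : ℝ) * ((f : ℝ) * Real.log Y.trace) :=
          mul_le_mul_of_nonneg_left hlY hp0
        rw [hk, hlu]
        nlinarith [h1, h2]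
  have hcase : k = 0 ∨ 0 < u := by
    rcases Nat.eq_zero_or_pos p with hp | hp
    · left; simp [hk, hp]
    · rcases Nat.eq_zero_or_pos f with hf | hf
      · left; simp [hk, hf]
      · right
        have : Nonempty (Fin p) := ⟨⟨0, hp⟩⟩
        have : Nonempty (Fin f) := ⟨⟨0, hf⟩⟩
        exact mul_pos (aux_pd_trace_pos hXpd) (aux_pd_trace_pos hYpd)
  have hkey : k - k * Real.log (k / c) ≤ c * u - k * Real.log u :=
    aux_log_bound hc (by positivity) hune hcase
  linarith
end

section
/- Let X, X_* be p×p real matrices and Y, Y_* be f×f real matrices. Then ‖X⊗Y − X_*⊗Y_*‖_F ≤ √f·‖Y_*‖₂·‖X − X_*‖_F + √p·‖X_*‖₂·‖Y − Y_*‖_F + ‖X − X_*‖_F·‖Y − Y_*‖_F. -/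
open Matrix Real
open scoped Kronecker BigOperators

/-- The Frobenius norm of a real matrix. -/
noncomputable def Matrix.frobNorm {m n : Type*} [Fintype m] [Fintype n]
    (M : Matrix m n ℝ) : ℝ := Real.sqrt (∑ i, ∑ j, (M i j) ^ 2)

/-- The spectral (ℓ2 operator) norm of a real square matrix. -/
noncomputable def Matrix.specNorm {n : Type*} [Fintype n] [DecidableEq n]
    (M : Matrix n n ℝ) : ℝ :=
  ‖(Matrix.toEuclideanCLM (𝕜 := ℝ) M : EuclideanSpace ℝ n →L[ℝ] EuclideanSpace ℝ n)‖

namespace Stmt15Aux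

lemma frobNorm_nonneg {m n : Type*} [Fintype m] [Fintype n] (M : Matrix m n ℝ) :
    0 ≤ M.frobNorm := Real.sqrt_nonneg _

lemma specNorm_nonneg {n : Type*} [Fintype n] [DecidableEq n] (M : Matrix n n ℝ) :
    0 ≤ M.specNorm := norm_nonneg _

lemma frobNorm_eq_norm {m n : Type*} [Fintype m] [Fintype n] (M : Matrix m n ℝ) :
    M.frobNorm =
      ‖((WithLp.equiv 2 (m × n → ℝ)).symm fun q => M q.1 q.2 : EuclideanSpace ℝ (m × n))‖ := by
  rw [EuclideanSpace.norm_eq, Matrix.frobNorm, Fintype.sum_prod_type]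
  congr 1
  refine Finset.sum_congr rfl fun i _ => Finset.sum_congr rfl fun j _ => ?_
  simp [Real.norm_eq_abs, sq_abs]

lemma frobNorm_add_le {m n : Type*} [Fintype m] [Fintype n] (A B : Matrix m n ℝ) :
    (A + B).frobNorm ≤ A.frobNorm + B.frobNorm := by
  simp only [frobNorm_eq_norm]
  have : ((WithLp.equiv 2 (m × n → ℝ)).symm fun q => (A + B) q.1 q.2 : EuclideanSpace ℝ (m × n))
      = ((WithLp.equiv 2 (m × n → ℝ)).symm fun q => A q.1 q.2)
        + ((WithLp.equiv 2 (m × n → ℝ)).symm fun q => B q.1 q.2) := by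
    ext q
    simp [Matrix.add_apply]
  rw [this]
  exact norm_add_le _ _

lemma frobNorm_kron {α β γ δ : Type*} [Fintype α] [Fintype β] [Fintype γ] [Fintype δ]
    (A : Matrix α β ℝ) (B : Matrix γ δ ℝ) :
    (A ⊗ₖ B).frobNorm = A.frobNorm * B.frobNorm := by
  unfold Matrix.frobNorm
  rw [← Real.sqrt_mul (by positivity)]
  congr 1
  simp only [Fintype.sum_prod_type, Matrix.kroneckerMap_apply, mul_pow]
  rw [Finset.sum_mul_sum]
  refine Finset.sum_congr rfl fun i _ => ?_
  refine Finset.sum_congr rfl fun k _ => ?_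
  rw [Finset.sum_mul_sum]

lemma col_sq_sum_le {n : Type*} [Fintype n] [DecidableEq n] (M : Matrix n n ℝ) (j : n) :
    ∑ i, (M i j) ^ 2 ≤ M.specNorm ^ 2 := by
  set x : EuclideanSpace ℝ n := (WithLp.equiv 2 (n → ℝ)).symm (Pi.single j 1) with hxdef
  have hx : ‖x‖ = 1 := by
    rw [hxdef]
    have : ((WithLp.equiv 2 (n → ℝ)).symm (Pi.single j 1) : EuclideanSpace ℝ n)
        = EuclideanSpace.single j (1 : ℝ) := rfl
    rw [this, EuclideanSpace.norm_single, norm_one]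
  have h := (Matrix.toEuclideanCLM (𝕜 := ℝ) M).le_opNorm x
  rw [hx, mul_one] at h
  have hMx : Matrix.toEuclideanCLM (𝕜 := ℝ) M x
      = ((WithLp.equiv 2 (n → ℝ)).symm (fun i => M i j) : EuclideanSpace ℝ n) := by
    rw [hxdef]
    change Matrix.toEuclideanCLM (𝕜 := ℝ) M (WithLp.toLp 2 _) = WithLp.toLp 2 _
    rw [Matrix.toEuclideanCLM_toLp]
    congr 1
    ext i
    simp [Matrix.toLin'_apply, Matrix.mulVec_single]
  rw [hMx] at h
  have hnorm : ‖((WithLp.equiv 2 (n → ℝ)).symm (fun i => M i j) : EuclideanSpace ℝ n)‖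
      = Real.sqrt (∑ i, (M i j) ^ 2) := by
    rw [EuclideanSpace.norm_eq]
    congr 1
    refine Finset.sum_congr rfl fun i _ => ?_
    simp [Real.norm_eq_abs, sq_abs]
  rw [hnorm] at h
  calc ∑ i, (M i j) ^ 2 = (Real.sqrt (∑ i, (M i j) ^ 2)) ^ 2 := by
        rw [Real.sq_sqrt (by positivity)]
    _ ≤ M.specNorm ^ 2 := by
        have h0 : (0:ℝ) ≤ Real.sqrt (∑ i, (M i j) ^ 2) := Real.sqrt_nonneg _
        exact pow_le_pow_left₀ h0 h 2

lemma frobNorm_le_sqrt_card_mul_specNorm {n : Type*} [Fintype n] [DecidableEq n]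
    (M : Matrix n n ℝ) :
    M.frobNorm ≤ Real.sqrt (Fintype.card n) * M.specNorm := by
  unfold Matrix.frobNorm
  have h1 : ∑ i, ∑ j, (M i j) ^ 2 ≤ (Fintype.card n : ℝ) * M.specNorm ^ 2 := by
    rw [Finset.sum_comm]
    calc ∑ j, ∑ i, (M i j) ^ 2 ≤ ∑ _j : n, M.specNorm ^ 2 :=
          Finset.sum_le_sum fun j _ => col_sq_sum_le M j
      _ = (Fintype.card n : ℝ) * M.specNorm ^ 2 := by
          rw [Finset.sum_const, Finset.card_univ, nsmul_eq_mul]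
  calc Real.sqrt (∑ i, ∑ j, (M i j) ^ 2)
      ≤ Real.sqrt ((Fintype.card n : ℝ) * M.specNorm ^ 2) := Real.sqrt_le_sqrt h1
    _ = Real.sqrt (Fintype.card n) * M.specNorm := by
        rw [Real.sqrt_mul (by positivity), Real.sqrt_sq (specNorm_nonneg M)]

end Stmt15Aux

open Stmt15Aux

/-- Frobenius norm perturbation bound for Kronecker products. -/
theorem stmt15 (p f : ℕ)
    (X Xstar : Matrix (Fin p) (Fin p) ℝ) (Y Ystar : Matrix (Fin f) (Fin f) ℝ) :
    (X ⊗ₖ Y - Xstar ⊗ₖ Ystar).frobNorm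
      ≤ Real.sqrt f * Ystar.specNorm * (X - Xstar).frobNorm
        + Real.sqrt p * Xstar.specNorm * (Y - Ystar).frobNorm
        + (X - Xstar).frobNorm * (Y - Ystar).frobNorm := by
  set A := X - Xstar with hA
  set B := Y - Ystar with hB
  have key : X ⊗ₖ Y - Xstar ⊗ₖ Ystar = (A ⊗ₖ Ystar + Xstar ⊗ₖ B) + A ⊗ₖ B := by
    ext ⟨i, k⟩ ⟨j, l⟩
    simp only [Matrix.sub_apply, Matrix.add_apply, Matrix.kroneckerMap_apply, hA, hB]
    ring
  rw [key]
  have h1 : ((A ⊗ₖ Ystar + Xstar ⊗ₖ B) + A ⊗ₖ B).frobNorm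
      ≤ (A ⊗ₖ Ystar).frobNorm + (Xstar ⊗ₖ B).frobNorm + (A ⊗ₖ B).frobNorm :=
    le_trans (frobNorm_add_le _ _)
      (add_le_add_left (frobNorm_add_le _ _) _)
  refine h1.trans ?_
  rw [frobNorm_kron, frobNorm_kron, frobNorm_kron]
  have hY : Ystar.frobNorm ≤ Real.sqrt f * Ystar.specNorm := by
    simpa using frobNorm_le_sqrt_card_mul_specNorm Ystar
  have hX : Xstar.frobNorm ≤ Real.sqrt p * Xstar.specNorm := by
    simpa using frobNorm_le_sqrt_card_mul_specNorm Xstar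
  have hAn := frobNorm_nonneg A
  have hBn := frobNorm_nonneg B
  have t1 : A.frobNorm * Ystar.frobNorm ≤ Real.sqrt f * Ystar.specNorm * A.frobNorm := by
    rw [mul_comm]
    exact mul_le_mul_of_nonneg_right hY hAn
  have t2 : Xstar.frobNorm * B.frobNorm ≤ Real.sqrt p * Xstar.specNorm * B.frobNorm :=
    mul_le_mul_of_nonneg_right hX hBn
  linarith
end
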